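/- The 4-dimensional algebra over a field k of characteristic zero with basis {e, e₁, e₂, e*} and nonzero products e·e = e + 2e₂ + s·e*, e·e* = -2e*, e*·e = e*, e·e₁ = 2e₁ - 4e*, e·e₂ = -e₂, e₁·e = -e₁ + 2e*, e₂·e = -e₂, e₁·e₂ = e₁ - e*, e₂·e₁ = -2e₁ + 2e*, e₂·e₂ = e₂, together with the symmetric bilinear form B with B(e,e*) = B(e₁,e₂) = 1, B(e,e) = -s, and all other pairings of basis elements zero, is a quadratic Novikov algebra (for any scalar s). -/

import Mathlib

/-!
Every condition is linear in each of its arguments, so it suffices to check it on basis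
vectors, where it is a finite computation with the multiplication table and the Gram matrix.
Nondegeneracy holds because `e*, e₂, e₁, e + s e*` is a `B`-dual family to `e, e₁, e₂, e*`.
-/

open Module

section

variable {R M N ι : Type*} [CommSemiring R] [AddCommMonoid M] [Module R M] [AddCommMonoid N]
  [Module R N] (b : Basis ι R M)

theorem Module.Basis.forall_trilinear_eq {f g : M →ₗ[R] M →ₗ[R] M →ₗ[R] N}
    (h : ∀ i j l, f (b i) (b j) (b l) = g (b i) (b j) (b l)) (x y z : M) :
    f x y z = g x y z := by
  rw [b.ext fun i => LinearMap.ext_basis b b (h i)]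

theorem rightCommutative_of_basis (mul : M →ₗ[R] M →ₗ[R] M)
    (h : ∀ i j l, mul (mul (b i) (b j)) (b l) = mul (mul (b i) (b l)) (b j)) (x y z : M) :
    mul (mul x y) z = mul (mul x z) y := by
  simpa using b.forall_trilinear_eq (f := mul.compr₂ mul)
    (g := (LinearMap.lflip (R₀ := R)).toLinearMap ∘ₗ mul.compr₂ mul) (by simpa) x y z

theorem separatingLeft_of_dualFamily [DecidableEq ι] (B : LinearMap.BilinForm R M) (d : ι → M)
    (hd : ∀ i j, B (b i) (d j) = if i = j then 1 else 0) : B.SeparatingLeft := by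
  intro x hx
  have flip_eq_coord (j : ι) : B.flip (d j) = b.coord j :=
    b.ext fun i => by simp [hd, Finsupp.single_apply, eq_comm]
  exact b.ext_elem fun j => by simpa [← b.coord_apply, ← flip_eq_coord] using hx (d j)

end

section

variable {R M ι : Type*} [CommRing R] [AddCommGroup M] [Module R M] (b : Basis ι R M)
  (mul : M →ₗ[R] M →ₗ[R] M)

theorem leftSymmetric_of_basis
    (h : ∀ i j l, mul (mul (b i) (b j)) (b l) - mul (b i) (mul (b j) (b l)) =
      mul (mul (b j) (b i)) (b l) - mul (b j) (mul (b i) (b l))) (x y z : M) :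
    mul (mul x y) z - mul x (mul y z) = mul (mul y x) z - mul y (mul x z) := by
  let associator := mul.compr₂ mul - (LinearMap.llcomp R M M M ∘ₗ mul).compl₂ mul
  simpa [associator] using
    b.forall_trilinear_eq (f := associator) (g := associator.flip) (by simpa [associator]) x y z

theorem invariant_of_basis (B : LinearMap.BilinForm R M)
    (h : ∀ i j l, B (mul (b i) (b j)) (b l) =
      -B (b j) (mul (b i) (b l) + mul (b l) (b i))) (x y z : M) :
    B (mul x y) z = -B y (mul x z + mul z x) := by
  -- phrased as a vanishing sum: instance search finds no `Neg` on `M →ₗ M →ₗ M →ₗ R`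
  have := b.forall_trilinear_eq (N := R) (g := 0)
    (f := mul.compr₂ B + ((LinearMap.llcomp R M M R).flip ∘ₗ (mul + mul.flip)).compl₂ B)
    (by simpa [add_eq_zero_iff_eq_neg] using h) x y z
  simpa [add_eq_zero_iff_eq_neg] using this

end

section

variable {k A : Type*} [CommRing k] [AddCommGroup A] [Module k A]

/-- Entry `(i, j)` is the product `v i * v j`, for the basis `v = (e, e₁, e₂, e*)`. -/
def doubleExtensionMul (s : k) (v : Fin 4 → A) : Fin 4 → Fin 4 → A :=
  ![![v 0 + (2 : k) • v 2 + s • v 3, (2 : k) • v 1 - (4 : k) • v 3, -v 2, (-2 : k) • v 3],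
    ![-v 1 + (2 : k) • v 3, 0, v 1 - v 3, 0],
    ![-v 2, (-2 : k) • v 1 + (2 : k) • v 3, v 2, 0],
    ![v 3, 0, 0, 0]]

def doubleExtensionForm (s : k) : Matrix (Fin 4) (Fin 4) k :=
  !![-s, 0, 0, 1; 0, 0, 1, 0; 0, 1, 0, 0; 1, 0, 0, 0]

variable {mul : A →ₗ[k] A →ₗ[k] A} {B : LinearMap.BilinForm k A} {b : Basis (Fin 4) k A}
  {s : k}

theorem leftSymmetric_of_doubleExtensionMul
    (hmul : ∀ i j, mul (b i) (b j) = doubleExtensionMul s b i j) (x y z : A) :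
    mul (mul x y) z - mul x (mul y z) = mul (mul y x) z - mul y (mul x z) := by
  refine leftSymmetric_of_basis b mul (fun i j l => ?_) x y z
  fin_cases i <;> fin_cases j <;> fin_cases l <;>
    simp only [Fin.reduceFinMk, Fin.isValue, hmul, doubleExtensionMul, Matrix.cons_val, map_add,
      map_sub, map_neg, map_smul, map_zero, LinearMap.add_apply, LinearMap.sub_apply,
      LinearMap.neg_apply, LinearMap.smul_apply, LinearMap.zero_apply] <;>
    module

theorem rightCommutative_of_doubleExtensionMul
    (hmul : ∀ i j, mul (b i) (b j) = doubleExtensionMul s b i j) (x y z : A) :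
    mul (mul x y) z = mul (mul x z) y := by
  refine rightCommutative_of_basis b mul (fun i j l => ?_) x y z
  fin_cases i <;> fin_cases j <;> fin_cases l <;>
    simp only [Fin.reduceFinMk, Fin.isValue, hmul, doubleExtensionMul, Matrix.cons_val, map_add,
      map_sub, map_neg, map_smul, map_zero, LinearMap.add_apply, LinearMap.sub_apply,
      LinearMap.neg_apply, LinearMap.smul_apply, LinearMap.zero_apply] <;>
    module

theorem invariant_of_doubleExtension
    (hmul : ∀ i j, mul (b i) (b j) = doubleExtensionMul s b i j)
    (hB : ∀ i j, B (b i) (b j) = doubleExtensionForm s i j) (x y z : A) :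
    B (mul x y) z = -B y (mul x z + mul z x) := by
  refine invariant_of_basis b mul B (fun i j l => ?_) x y z
  fin_cases i <;> fin_cases j <;> fin_cases l <;>
    simp only [Fin.reduceFinMk, Fin.isValue, hmul, hB, doubleExtensionMul, doubleExtensionForm,
      Matrix.of_apply, Matrix.cons_val, map_add, map_sub, map_neg, map_smul, map_zero,
      LinearMap.add_apply, LinearMap.sub_apply, LinearMap.neg_apply, LinearMap.smul_apply,
      LinearMap.zero_apply, smul_eq_mul] <;>
    ring

theorem isSymm_of_doubleExtensionForm (hB : ∀ i j, B (b i) (b j) = doubleExtensionForm s i j) :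
    B.IsSymm :=
  (B.isSymm_iff_basis b).2 fun i j => by
    fin_cases i <;> fin_cases j <;> simp [hB, doubleExtensionForm]

theorem separatingLeft_of_doubleExtensionForm
    (hB : ∀ i j, B (b i) (b j) = doubleExtensionForm s i j) : B.SeparatingLeft :=
  separatingLeft_of_dualFamily b B ![b 3, b 2, b 1, b 0 + s • b 3] fun i j => by
    fin_cases i <;> fin_cases j <;> simp [hB, doubleExtensionForm]

end

theorem four_dim_double_extension_quadratic_novikov
    {k A : Type*} [Field k] [AddCommGroup A] [Module k A]
    (mul : A →ₗ[k] A →ₗ[k] A) (B : LinearMap.BilinForm k A)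
    (b : Module.Basis (Fin 4) k A) (s : k)
    (m00 : mul (b 0) (b 0) = b 0 + (2 : k) • b 2 + s • b 3)
    (m01 : mul (b 0) (b 1) = (2 : k) • b 1 - (4 : k) • b 3)
    (m02 : mul (b 0) (b 2) = -b 2)
    (m03 : mul (b 0) (b 3) = (-2 : k) • b 3)
    (m10 : mul (b 1) (b 0) = -b 1 + (2 : k) • b 3)
    (m11 : mul (b 1) (b 1) = 0)
    (m12 : mul (b 1) (b 2) = b 1 - b 3)
    (m13 : mul (b 1) (b 3) = 0)
    (m20 : mul (b 2) (b 0) = -b 2)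
    (m21 : mul (b 2) (b 1) = (-2 : k) • b 1 + (2 : k) • b 3)
    (m22 : mul (b 2) (b 2) = b 2)
    (m23 : mul (b 2) (b 3) = 0)
    (m30 : mul (b 3) (b 0) = b 3)
    (m31 : mul (b 3) (b 1) = 0)
    (m32 : mul (b 3) (b 2) = 0)
    (m33 : mul (b 3) (b 3) = 0)
    (B00 : B (b 0) (b 0) = -s)
    (B01 : B (b 0) (b 1) = 0) (B02 : B (b 0) (b 2) = 0) (B03 : B (b 0) (b 3) = 1)
    (B10 : B (b 1) (b 0) = 0) (B11 : B (b 1) (b 1) = 0)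
    (B12 : B (b 1) (b 2) = 1) (B13 : B (b 1) (b 3) = 0)
    (B20 : B (b 2) (b 0) = 0) (B21 : B (b 2) (b 1) = 1)
    (B22 : B (b 2) (b 2) = 0) (B23 : B (b 2) (b 3) = 0)
    (B30 : B (b 3) (b 0) = 1) (B31 : B (b 3) (b 1) = 0)
    (B32 : B (b 3) (b 2) = 0) (B33 : B (b 3) (b 3) = 0) :
    (∀ x y z, mul (mul x y) z - mul x (mul y z) = mul (mul y x) z - mul y (mul x z)) ∧
    (∀ x y z, mul (mul x y) z = mul (mul x z) y) ∧
    (∀ x y, B x y = B y x) ∧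
    (∀ x, (∀ y, B x y = 0) → x = 0) ∧
    (∀ x y z, B (mul x y) z = -(B y (mul x z + mul z x))) := by
  have hmul : ∀ i j, mul (b i) (b j) = doubleExtensionMul s b i j := by
    intro i j
    fin_cases i <;> fin_cases j <;>
      simpa only [Fin.reduceFinMk, Fin.isValue, doubleExtensionMul, Matrix.cons_val]
  have hB : ∀ i j, B (b i) (b j) = doubleExtensionForm s i j := by
    intro i j
    fin_cases i <;> fin_cases j <;>
      simpa only [Fin.reduceFinMk, Fin.isValue, doubleExtensionForm, Matrix.of_apply,
        Matrix.cons_val]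
  exact ⟨leftSymmetric_of_doubleExtensionMul hmul, rightCommutative_of_doubleExtensionMul hmul,
    LinearMap.BilinForm.isSymm_def.1 (isSymm_of_doubleExtensionForm hB),
    separatingLeft_of_doubleExtensionForm hB, invariant_of_doubleExtension hmul hB⟩
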